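/- arXiv:2206.07594 — 4 statements merged into one kernel-verified Lean document; each statement's English description precedes it below -/
import Mathlib

section
/- Let β̂ be a minimizer of β ↦ Σ_{i=1}^n λ_o² H(n ŵ'_i (y_i − X̃_iᵀ β)/(λ_o √n)) + λ_s ‖β‖₁, set θ_η = (β̂ − β*) η for η ∈ (0,1), and write r_{v,i} = ŵ'_i n (y_i − X̃_iᵀ v)/(λ_o √n). Suppose that for every η ∈ (0,1) with ‖θ_η‖₂ = r ≤ 1: (i) |λ_o √n Σ_{i=1}^n ŵ'_i h(r_{β*,i}) X̃_iᵀ θ_η| ≤ r_{a,2} ‖θ_η‖₂ + r_{a,1} ‖θ_η‖₁, and (ii) b₁ ‖θ_η‖₂² − r_{b,2} ‖θ_η‖₂ − r_{b,1} ≤ Σ_{i=1}^n λ_o √n ŵ'_i {−h(r_{β*+θ_η,i}) + h(r_{β*,i})} X̃_iᵀ θ_η, where b₁ > 0 and r_{a,1}, r_{a,2}, r_{b,1}, r_{b,2} ≥ 0. Suppose further that λ_s − C_s > 0 and (λ_s + C_s)/(λ_s − C_s) ≤ 2, where C_s = r_{a,2}/(3√s) + r_{a,1}. Then for any r satisfying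 (r_{a,2} + r_{b,2} + 3(r_{a,1} + λ_s)√s + √(b₁ r_{b,1}))/b₁ < r, the estimator satisfies ‖β̂ − β*‖₂ ≤ r. -/
/-
Suppose `‖β̂ - β*‖₂ > r` and shrink `θ = β̂ - β*` to `θ_η = η θ` with `‖θ_η‖₂ = r`. The Huber loss
is convex with derivative `h`, so the subgradient inequality at `β* + θ_η` towards `β̂`, combined
with the minimality of `β̂`, bounds the term of (ii) at `β* + θ_η` by
`λ_s (‖θ_η‖₁ on supp β* - ‖θ_η‖₁ off supp β*)`. Adding (i) and using `r_{a,1} ≤ λ_s` and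
Cauchy–Schwarz on the support gives `b₁ r² ≤ K r + r_{b,1}` with
`K = r_{a,2} + r_{b,2} + (r_{a,1} + λ_s) √s`, and this quadratic inequality forces
`r ≤ (K + √(b₁ r_{b,1})) / b₁`, contradicting the choice of `r`.
-/

open MeasureTheory ProbabilityTheory Matrix Finset Real

noncomputable section

namespace RobustSparse

/-- coordinatewise truncation at level `τ`: `x̃ⱼ = sgn(xⱼ) * min |xⱼ| τ`. -/
def trunc {d : ℕ} (τ : ℝ) (x : Fin d → ℝ) : Fin d → ℝ :=
  fun j => Real.sign (x j) * min |x j| τ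

/-- derivative of the Huber loss: `h(t) = t` for `|t| ≤ 1`, `sgn(t)` otherwise. -/
def hub (t : ℝ) : ℝ := if |t| ≤ 1 then t else Real.sign t

/-- the Huber loss. -/
def Huber (t : ℝ) : ℝ := if |t| ≤ 1 then t ^ 2 / 2 else |t| - 1 / 2

/-- ℓ1 norm of a vector. -/
def l1 {d : ℕ} (v : Fin d → ℝ) : ℝ := ∑ j, |v j|

/-- ℓ2 norm of a vector. -/
def l2 {d : ℕ} (v : Fin d → ℝ) : ℝ := Real.sqrt (∑ j, v j ^ 2)

/-- euclidean inner product. -/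
def ip {d : ℕ} (a b : Fin d → ℝ) : ℝ := ∑ j, a j * b j

/-- entrywise ℓ1 norm of a matrix. -/
def mat1 {d : ℕ} (M : Matrix (Fin d) (Fin d) ℝ) : ℝ := ∑ i, ∑ j, |M i j|

/-- Frobenius inner product `⟨A,B⟩ = Tr(AᵀB)`. -/
def minner {d : ℕ} (A B : Matrix (Fin d) (Fin d) ℝ) : ℝ := ∑ i, ∑ j, A i j * B i j

/-- the constraint set `𝔐_r = {M : Tr M ≤ r², M ⪰ 0}`. -/
def Mr (d : ℕ) (r : ℝ) : Set (Matrix (Fin d) (Fin d) ℝ) :=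
  {M | M.trace ≤ r ^ 2 ∧ M.PosSemidef}

/-- ℓ2 → ℓ2 operator norm of a matrix. -/
def opNorm {d : ℕ} (M : Matrix (Fin d) (Fin d) ℝ) : ℝ :=
  ‖Matrix.toEuclideanCLM (𝕜 := ℝ) M‖

/-- the constrained probability simplex `Δ^{n-1}`. -/
def simplex (n : ℕ) (ε : ℝ) : Set (Fin n → ℝ) :=
  {w | (∀ i, 0 ≤ w i ∧ w i ≤ 1) ∧ ∑ i, w i = 1 ∧ ∀ i, |w i| ≤ 1 / (n * (1 - ε))}

/-- an i.i.d. (independent, identically distributed, measurable) family. -/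
def IsIID {Ω E : Type*} [MeasurableSpace Ω] [MeasurableSpace E]
    (μ : Measure Ω) {n : ℕ} (f : Fin n → Ω → E) : Prop :=
  (∀ i, Measurable (f i)) ∧ iIndepFun f μ ∧
    ∀ i j, Measure.map (f i) μ = Measure.map (f j) μ

theorem abs_hub_le_one (u : ℝ) : |hub u| ≤ 1 := by
  unfold hub
  split_ifs with hu
  · exact hu
  · rcases Real.sign_apply_eq u with h | h | h <;> simp [h]

theorem huber_add_hub_mul_sub (u v : ℝ) :
    Huber u + hub u * (v - u) = hub u * v - hub u ^ 2 / 2 := by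
  unfold Huber hub
  split_ifs with hu
  · ring
  · rcases lt_or_gt_of_ne (show u ≠ 0 by rintro rfl; simp at hu) with h | h
    · rw [Real.sign_of_neg h, abs_of_neg h]; ring
    · rw [Real.sign_of_pos h, abs_of_pos h]; ring

-- `Huber v = sup_{|t| ≤ 1} (t v - t² / 2)`
theorem mul_sub_sq_div_two_le_huber {t : ℝ} (ht : |t| ≤ 1) (v : ℝ) :
    t * v - t ^ 2 / 2 ≤ Huber v := by
  unfold Huber
  split_ifs with hv
  · nlinarith [sq_nonneg (t - v)]
  · nlinarith [abs_mul t v, le_abs_self (t * v), sq_abs t, abs_nonneg t,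
      mul_le_mul_of_nonneg_left (not_le.1 hv).le (sub_nonneg.2 ht)]

theorem huber_add_hub_mul_sub_le (u v : ℝ) : Huber u + hub u * (v - u) ≤ Huber v :=
  huber_add_hub_mul_sub u v ▸ mul_sub_sq_div_two_le_huber (abs_hub_le_one u) v

theorem sq_mul_div_mul_sqrt (a x : ℝ) : a ^ 2 * (x / (a * √x)) = a * √x :=
  calc a ^ 2 * (x / (a * √x)) = a * a / a * (x / √x) := by ring
    _ = a * √x := by rw [mul_self_div_self, Real.div_sqrt]

theorem ip_sub {d : ℕ} (a b c : Fin d → ℝ) : ip a (b - c) = ip a b - ip a c :=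
  dotProduct_sub a b c

theorem ip_smul {d : ℕ} (a v : Fin d → ℝ) (c : ℝ) : ip a (c • v) = c * ip a v :=
  dotProduct_smul c a v

theorem l1_smul {d : ℕ} (c : ℝ) (v : Fin d → ℝ) : l1 (c • v) = |c| * l1 v := by
  simp [l1, abs_mul, mul_sum]

theorem l2_smul {d : ℕ} (c : ℝ) (v : Fin d → ℝ) : l2 (c • v) = |c| * l2 v := by
  simp only [l2, Pi.smul_apply, smul_eq_mul, mul_pow, ← mul_sum]
  rw [Real.sqrt_mul (sq_nonneg c), Real.sqrt_sq_eq_abs]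

theorem l1_eq_sum_filter_add_sum_filter {d : ℕ} (β v : Fin d → ℝ) :
    l1 v = ∑ j ∈ univ.filter (β · ≠ 0), |v j| + ∑ j ∈ univ.filter (β · = 0), |v j| := by
  rw [add_comm, l1, ← sum_filter_add_sum_filter_not univ (β · = 0)]

theorem sum_abs_le_sqrt_card_mul_l2 {d : ℕ} (A : Finset (Fin d)) (v : Fin d → ℝ) :
    ∑ j ∈ A, |v j| ≤ √(#A : ℝ) * l2 v := by
  rw [l2, ← Real.sqrt_mul (Nat.cast_nonneg _)]
  refine (le_abs_self _).trans (Real.abs_le_sqrt ?_)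
  calc (∑ j ∈ A, |v j|) ^ 2 ≤ #A * ∑ j ∈ A, |v j| ^ 2 :=
      sq_sum_le_card_mul_sum_sq (s := A) (f := fun j => |v j|)
    _ ≤ #A * ∑ j, v j ^ 2 := by
      simp only [sq_abs]
      exact mul_le_mul_of_nonneg_left
        (sum_le_sum_of_subset_of_nonneg (subset_univ A) fun j _ _ => sq_nonneg (v j))
        (Nat.cast_nonneg _)

theorem abs_add_mul_sub_abs_add_le {b t η : ℝ} (h0 : 0 ≤ η) (h1 : η ≤ 1) :
    |b + η * t| - |b + t| ≤ (1 - η) * (if b = 0 then -|t| else |t|) := by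
  split_ifs with hb
  · rw [hb, zero_add, zero_add, abs_mul, abs_of_nonneg h0]
    exact le_of_eq (by ring)
  · have h := abs_add_le (b + t) ((η - 1) * t)
    rw [abs_mul, abs_of_nonpos (by linarith : η - 1 ≤ 0),
      show b + t + (η - 1) * t = b + η * t by ring] at h
    linarith

theorem l1_add_smul_sub_l1_add_le {d : ℕ} (β θ : Fin d → ℝ) {η : ℝ} (h0 : 0 ≤ η) (h1 : η ≤ 1) :
    l1 (β + η • θ) - l1 (β + θ) ≤
      (1 - η) * (∑ j ∈ univ.filter (β · ≠ 0), |θ j| - ∑ j ∈ univ.filter (β · = 0), |θ j|) :=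
  calc l1 (β + η • θ) - l1 (β + θ) = ∑ j, (|β j + η * θ j| - |β j + θ j|) := by
        simp [l1, sum_sub_distrib]
    _ ≤ ∑ j, (1 - η) * (if β j = 0 then -|θ j| else |θ j|) :=
        sum_le_sum fun j _ => abs_add_mul_sub_abs_add_le h0 h1
    _ = _ := by
        rw [← mul_sum, sum_ite, sum_neg_distrib]
        ring_nf

theorem le_div_of_mul_sq_le {a b c x : ℝ} (ha : 0 < a) (hb : 0 ≤ b) (hc : 0 ≤ c)
    (h : a * x ^ 2 ≤ b * x + c) : x ≤ (b + √(a * c)) / a := by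
  rw [le_div_iff₀ ha]
  by_contra! hlt
  have hsq := Real.sq_sqrt (mul_nonneg ha.le hc)
  have hs0 := Real.sqrt_nonneg (a * c)
  have hpos : 0 ≤ x * a - b := by linarith
  -- `(a x - b)² ≤ a x (a x - b) ≤ a c`
  nlinarith [mul_le_mul_of_nonneg_left h ha.le, mul_nonneg hb hpos,
    mul_self_lt_mul_self hs0 (show √(a * c) < x * a - b by linarith)]

section PenalizedHuber

variable {n d : ℕ} (lamo : ℝ) (y : Fin n → ℝ) (Xt : Fin n → Fin d → ℝ) (w' : Fin n → ℝ)

def huberRisk (β : Fin d → ℝ) : ℝ :=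
  ∑ i, lamo ^ 2 * Huber (n * w' i * (y i - ip (Xt i) β) / (lamo * √n))

-- `huberScore β v` is minus the derivative of `huberRisk` at `β` in the direction `v`.
def huberScore (β v : Fin d → ℝ) : ℝ :=
  lamo * √n * ∑ i, w' i * hub (w' i * n * (y i - ip (Xt i) β) / (lamo * √n)) * ip (Xt i) v

theorem huberScore_smul (β v : Fin d → ℝ) (c : ℝ) :
    huberScore lamo y Xt w' β (c • v) = c * huberScore lamo y Xt w' β v := by
  simp only [huberScore, ip_smul, mul_sum]
  exact sum_congr rfl fun i _ => by ring

theorem huberScore_sub_huberScore (β β' v : Fin d → ℝ) :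
    huberScore lamo y Xt w' β v - huberScore lamo y Xt w' β' v =
      ∑ i, lamo * √n * w' i *
        (-hub (w' i * n * (y i - ip (Xt i) β') / (lamo * √n))
          + hub (w' i * n * (y i - ip (Xt i) β) / (lamo * √n))) * ip (Xt i) v := by
  simp only [huberScore, mul_sum, ← sum_sub_distrib]
  exact sum_congr rfl fun i _ => by ring

theorem huberRisk_sub_huberScore_le (β γ : Fin d → ℝ) :
    huberRisk lamo y Xt w' β - huberScore lamo y Xt w' β (γ - β) ≤ huberRisk lamo y Xt w' γ := by
  simp only [huberRisk, huberScore, mul_sum, ← sum_sub_distrib]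
  refine sum_le_sum fun i _ => ?_
  have hconv := mul_le_mul_of_nonneg_left
    (huber_add_hub_mul_sub_le (n * w' i * (y i - ip (Xt i) β) / (lamo * √n))
      (n * w' i * (y i - ip (Xt i) γ) / (lamo * √n))) (sq_nonneg lamo)
  rw [ip_sub, mul_comm (w' i) (n : ℝ)]
  linear_combination hconv
    + w' i * hub (n * w' i * (y i - ip (Xt i) β) / (lamo * √n)) * (ip (Xt i) γ - ip (Xt i) β)
      * sq_mul_div_mul_sqrt lamo n

theorem neg_huberScore_le_of_forall_le {lams : ℝ} (hlams : 0 ≤ lams) {βhat : Fin d → ℝ}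
    (hmin : ∀ γ, huberRisk lamo y Xt w' βhat + lams * l1 βhat
      ≤ huberRisk lamo y Xt w' γ + lams * l1 γ)
    (β : Fin d → ℝ) {η : ℝ} (hη0 : 0 ≤ η) (hη1 : η < 1) :
    -huberScore lamo y Xt w' (β + η • (βhat - β)) (βhat - β) ≤
      lams * (∑ j ∈ univ.filter (β · ≠ 0), |(βhat - β) j|
        - ∑ j ∈ univ.filter (β · = 0), |(βhat - β) j|) := by
  have hl1 := l1_add_smul_sub_l1_add_le β (βhat - β) hη0 hη1.le
  rw [add_sub_cancel] at hl1
  have hsub := huberRisk_sub_huberScore_le lamo y Xt w' (β + η • (βhat - β)) βhat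
  rw [show βhat - (β + η • (βhat - β)) = (1 - η) • (βhat - β) by module, huberScore_smul] at hsub
  refine le_of_mul_le_mul_left ?_ (sub_pos.2 hη1)
  linarith [hmin (β + η • (βhat - β)), mul_le_mul_of_nonneg_left hl1 hlams]

theorem quadratic_bound_on_segment {lams b1 ra1 ra2 rb1 rb2 : ℝ} (hra1 : 0 ≤ ra1)
    (hlams : ra1 ≤ lams) {βhat : Fin d → ℝ}
    (hmin : ∀ γ, huberRisk lamo y Xt w' βhat + lams * l1 βhat
      ≤ huberRisk lamo y Xt w' γ + lams * l1 γ)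
    (βstar : Fin d → ℝ) {η : ℝ} (hη0 : 0 ≤ η) (hη1 : η < 1)
    (hscore : |huberScore lamo y Xt w' βstar (η • (βhat - βstar))|
      ≤ ra2 * l2 (η • (βhat - βstar)) + ra1 * l1 (η • (βhat - βstar)))
    (hcurv : b1 * l2 (η • (βhat - βstar)) ^ 2 - rb2 * l2 (η • (βhat - βstar)) - rb1
      ≤ huberScore lamo y Xt w' βstar (η • (βhat - βstar))
        - huberScore lamo y Xt w' (βstar + η • (βhat - βstar)) (η • (βhat - βstar))) :
    b1 * l2 (η • (βhat - βstar)) ^ 2 ≤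
      (ra2 + rb2 + (ra1 + lams) * √(#(univ.filter (βstar · ≠ 0)) : ℝ))
        * l2 (η • (βhat - βstar)) + rb1 := by
  have hF := neg_huberScore_le_of_forall_le lamo y Xt w' (hra1.trans hlams) hmin βstar hη0 hη1
  set θ := βhat - βstar
  set S := univ.filter (βstar · ≠ 0)
  rw [l2_smul, abs_of_nonneg hη0] at hscore hcurv ⊢
  rw [l1_smul, abs_of_nonneg hη0, l1_eq_sum_filter_add_sum_filter βstar θ] at hscore
  rw [huberScore_smul lamo y Xt w' (βstar + η • θ)] at hcurv
  have hCS : η * ∑ j ∈ S, |θ j| ≤ √(#S : ℝ) * (η * l2 θ) := by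
    rw [mul_left_comm]
    exact mul_le_mul_of_nonneg_left (sum_abs_le_sqrt_card_mul_l2 S θ) hη0
  nlinarith [le_abs_self (huberScore lamo y Xt w' βstar (η • θ)),
    mul_le_mul_of_nonneg_left hF hη0, mul_le_mul_of_nonneg_left hCS (by linarith : 0 ≤ ra1 + lams),
    mul_nonneg (mul_nonneg hη0 (sub_nonneg.2 hlams))
      (sum_nonneg fun j (_ : j ∈ univ.filter (βstar · = 0)) => abs_nonneg (θ j))]

end PenalizedHuber

theorem statement2_general
    {d n s : ℕ}
    (y : Fin n → ℝ) (Xt : Fin n → Fin d → ℝ)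
    (w' : Fin n → ℝ)
    (βstar : Fin d → ℝ) (hs : (Finset.univ.filter fun j => βstar j ≠ 0).card = s)
    (lamo lams : ℝ)
    (βhat : Fin d → ℝ)
    (hmin : ∀ β : Fin d → ℝ,
      (∑ i, lamo ^ 2 * Huber (n * w' i * (y i - ip (Xt i) βhat) / (lamo * Real.sqrt n))
          + lams * l1 βhat)
        ≤ ∑ i, lamo ^ 2 * Huber (n * w' i * (y i - ip (Xt i) β) / (lamo * Real.sqrt n))
          + lams * l1 β)
    (b1 ra1 ra2 rb1 rb2 r : ℝ)
    (hb1 : 0 < b1) (hra1 : 0 ≤ ra1) (hra2 : 0 ≤ ra2) (hrb1 : 0 ≤ rb1) (hrb2 : 0 ≤ rb2)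
    (hgrad : ∀ η : ℝ, 0 < η → η < 1 →
      l2 (fun j => η * (βhat j - βstar j)) = r →
      |lamo * Real.sqrt n * ∑ i, w' i *
          hub (w' i * n * (y i - ip (Xt i) βstar) / (lamo * Real.sqrt n))
          * ip (Xt i) (fun j => η * (βhat j - βstar j))|
        ≤ ra2 * l2 (fun j => η * (βhat j - βstar j))
          + ra1 * l1 (fun j => η * (βhat j - βstar j)))
    (hlower : ∀ η : ℝ, 0 < η → η < 1 →
      l2 (fun j => η * (βhat j - βstar j)) = r →
      b1 * l2 (fun j => η * (βhat j - βstar j)) ^ 2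
          - rb2 * l2 (fun j => η * (βhat j - βstar j)) - rb1
        ≤ ∑ i, lamo * Real.sqrt n * w' i *
            (- hub (w' i * n *
                (y i - ip (Xt i) (fun j => βstar j + η * (βhat j - βstar j)))
                  / (lamo * Real.sqrt n))
              + hub (w' i * n * (y i - ip (Xt i) βstar) / (lamo * Real.sqrt n)))
            * ip (Xt i) (fun j => η * (βhat j - βstar j)))
    (hCs1 : 0 < lams - (ra2 / (3 * Real.sqrt s) + ra1))
    (hrlow : (ra2 + rb2 + 3 * (ra1 + lams) * Real.sqrt s + Real.sqrt (b1 * rb1)) / b1 < r) :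
    l2 (fun j => βhat j - βstar j) ≤ r := by
  have hlams : ra1 ≤ lams := by linarith [show 0 ≤ ra2 / (3 * √s) by positivity]
  have hK : 0 ≤ ra2 + rb2 + (ra1 + lams) * √s :=
    add_nonneg (add_nonneg hra2 hrb2) (mul_nonneg (by linarith) (Real.sqrt_nonneg _))
  have hr0 : 0 < r := by
    refine lt_of_le_of_lt (div_nonneg ?_ hb1.le) hrlow
    nlinarith [Real.sqrt_nonneg (s : ℝ), Real.sqrt_nonneg (b1 * rb1)]
  by_contra! hR
  change r < l2 (βhat - βstar) at hR
  have hR0 := hr0.trans hR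
  set η := r / l2 (βhat - βstar)
  have hη0 : 0 < η := div_pos hr0 hR0
  have hl2 : l2 (η • (βhat - βstar)) = r := by
    rw [l2_smul, abs_of_pos hη0, div_mul_cancel₀ r hR0.ne']
  have hη1 : η < 1 := (div_lt_one hR0).2 hR
  have hquad := quadratic_bound_on_segment lamo y Xt w' hra1 hlams hmin βstar hη0.le hη1
    (hgrad η hη0 hη1 hl2)
    (by rw [huberScore_sub_huberScore]; exact hlower η hη0 hη1 hl2)
  rw [hl2, hs] at hquad
  have hnum : ra2 + rb2 + (ra1 + lams) * √s + √(b1 * rb1)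
      ≤ ra2 + rb2 + 3 * (ra1 + lams) * √s + √(b1 * rb1) := by
    nlinarith [Real.sqrt_nonneg (s : ℝ)]
  exact ((le_div_of_mul_sq_le hb1 hK hrb1 hquad).trans_lt
    ((div_le_div_of_nonneg_right hnum hb1.le).trans_lt hrlow)).false

/-- Proposition: deterministic error bound for the weighted
ℓ1-penalized Huber regression estimator. -/
theorem statement2
    {d n s : ℕ} (hn : 0 < n)
    (y : Fin n → ℝ) (Xt : Fin n → Fin d → ℝ)
    (w' : Fin n → ℝ) (hw' : ∀ i, w' i = 0 ∨ w' i = 1 / n)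
    (βstar : Fin d → ℝ) (hs : (Finset.univ.filter fun j => βstar j ≠ 0).card = s)
    (lamo lams : ℝ) (hlamo : 0 < lamo) (hlams : 0 < lams)
    (βhat : Fin d → ℝ)
    (hmin : ∀ β : Fin d → ℝ,
      (∑ i, lamo ^ 2 * Huber (n * w' i * (y i - ip (Xt i) βhat) / (lamo * Real.sqrt n))
          + lams * l1 βhat)
        ≤ ∑ i, lamo ^ 2 * Huber (n * w' i * (y i - ip (Xt i) β) / (lamo * Real.sqrt n))
          + lams * l1 β)
    (b1 ra1 ra2 rb1 rb2 r : ℝ)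
    (hb1 : 0 < b1) (hra1 : 0 ≤ ra1) (hra2 : 0 ≤ ra2) (hrb1 : 0 ≤ rb1) (hrb2 : 0 ≤ rb2)
    (hr1 : r ≤ 1)
    (hgrad : ∀ η : ℝ, 0 < η → η < 1 →
      l2 (fun j => η * (βhat j - βstar j)) = r →
      |lamo * Real.sqrt n * ∑ i, w' i *
          hub (w' i * n * (y i - ip (Xt i) βstar) / (lamo * Real.sqrt n))
          * ip (Xt i) (fun j => η * (βhat j - βstar j))|
        ≤ ra2 * l2 (fun j => η * (βhat j - βstar j))
          + ra1 * l1 (fun j => η * (βhat j - βstar j)))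
    (hlower : ∀ η : ℝ, 0 < η → η < 1 →
      l2 (fun j => η * (βhat j - βstar j)) = r →
      b1 * l2 (fun j => η * (βhat j - βstar j)) ^ 2
          - rb2 * l2 (fun j => η * (βhat j - βstar j)) - rb1
        ≤ ∑ i, lamo * Real.sqrt n * w' i *
            (- hub (w' i * n *
                (y i - ip (Xt i) (fun j => βstar j + η * (βhat j - βstar j)))
                  / (lamo * Real.sqrt n))
              + hub (w' i * n * (y i - ip (Xt i) βstar) / (lamo * Real.sqrt n)))
            * ip (Xt i) (fun j => η * (βhat j - βstar j)))
    (hCs1 : 0 < lams - (ra2 / (3 * Real.sqrt s) + ra1))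
    (hCs2 : (lams + (ra2 / (3 * Real.sqrt s) + ra1))
        / (lams - (ra2 / (3 * Real.sqrt s) + ra1)) ≤ 2)
    (hrlow : (ra2 + rb2 + 3 * (ra1 + lams) * Real.sqrt s + Real.sqrt (b1 * rb1)) / b1 < r) :
    l2 (fun j => βhat j - βstar j) ≤ r :=
  statement2_general y Xt w' βstar hs lamo lams βhat hmin b1 ra1 ra2 rb1 rb2 r hb1 hra1 hra2 hrb1
    hrb2 hgrad hlower hCs1 hrlow

end RobustSparse
end
end

section
/- Suppose the truncated inlier covariates x̃_1,...,x̃_n ∈ ℝ^d satisfy sup_{M ∈ 𝔐_r} ((1/n) Σ_{i=1}^n ⟨x̃_i x̃_iᵀ, M⟩ − λ_*' ‖M‖₁) ≤ ‖Σ‖_op r². Then for every index set I_m ⊆ {1,...,n} with |I_m| = m, every u ∈ ℝ^n with ‖u‖_∞ ≤ c, and every v ∈ ℝ^d with ‖v‖₂ = r, one has |Σ_{i ∈ I_m} (1/n) u_i x̃_iᵀ v| ≤ c √(m/n) ‖Σ^{1/2}‖_op r + c √(m/n) √λ_*' ‖v‖₁. -/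
open MeasureTheory ProbabilityTheory Matrix Finset Real

noncomputable section

namespace RobustSparse

/-!
Testing the hypothesis against the rank-one matrix `v vᵀ ∈ 𝔐_r` gives
`(1/n) ∑ᵢ ⟨x̃ᵢ, v⟩² ≤ λ' ‖v‖₁² + ‖Σ‖ r² ≤ (‖Σ^{1/2}‖ r + √λ' ‖v‖₁)²`, since `‖Σ‖ ≤ ‖Σ^{1/2}‖²`.
Cauchy–Schwarz over `I_m`, with `|uᵢ| ≤ c`, bounds the partial sum by `c √m` times the square root
of the full sum of squares, which is at most `√n (‖Σ^{1/2}‖ r + √λ' ‖v‖₁)`.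
-/

lemma opNorm_nonneg {d : ℕ} (A : Matrix (Fin d) (Fin d) ℝ) : 0 ≤ opNorm A := norm_nonneg _

lemma l1_nonneg {d : ℕ} (v : Fin d → ℝ) : 0 ≤ l1 v := by unfold l1; positivity

lemma l2_nonneg {d : ℕ} (v : Fin d → ℝ) : 0 ≤ l2 v := Real.sqrt_nonneg _

lemma vecMulVec_self_mem_Mr {d : ℕ} (v : Fin d → ℝ) : vecMulVec v v ∈ Mr d (l2 v) := by
  refine ⟨le_of_eq ?_, posSemidef_vecMulVec_self_star v⟩
  rw [l2, Real.sq_sqrt (by positivity)]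
  simp [Matrix.trace, vecMulVec_apply, sq]

lemma minner_vecMulVec_self {d : ℕ} (x v : Fin d → ℝ) :
    minner (vecMulVec x x) (vecMulVec v v) = ip x v ^ 2 := by
  simp only [minner, vecMulVec_apply, ip, sq, Finset.sum_mul_sum]
  exact Finset.sum_congr rfl fun i _ => Finset.sum_congr rfl fun j _ => by ring

lemma mat1_vecMulVec_self {d : ℕ} (v : Fin d → ℝ) : mat1 (vecMulVec v v) = l1 v ^ 2 := by
  simp only [mat1, vecMulVec_apply, l1, abs_mul, sq, Finset.sum_mul_sum]

lemma opNorm_mul_le {d : ℕ} (A B : Matrix (Fin d) (Fin d) ℝ) :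
    opNorm (A * B) ≤ opNorm A * opNorm B := by
  simpa only [opNorm, _root_.map_mul] using norm_mul_le _ _

lemma mul_sq_add_mul_sq_le_sq_add {lam a b x y : ℝ} (hlam : 0 ≤ lam) (hb : 0 ≤ b) (hx : 0 ≤ x)
    (hy : 0 ≤ y) (hab : a ≤ b ^ 2) : lam * y ^ 2 + a * x ^ 2 ≤ (b * x + √lam * y) ^ 2 := by
  have hcross : 0 ≤ b * x * (√lam * y) := by positivity
  have hsq : (√lam * y) ^ 2 = lam * y ^ 2 := by rw [mul_pow, Real.sq_sqrt hlam]
  nlinarith [mul_le_mul_of_nonneg_right hab (sq_nonneg x)]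

lemma sum_ip_sq_le_of_sup_bound {d n : ℕ} (hn : 0 < n) (xt : Fin n → Fin d → ℝ) (lam' K : ℝ)
    (v : Fin d → ℝ)
    (hsup : ∀ M ∈ Mr d (l2 v),
      (1 / n : ℝ) * ∑ i, minner (vecMulVec (xt i) (xt i)) M - lam' * mat1 M ≤ K) :
    ∑ i, ip (xt i) v ^ 2 ≤ n * (lam' * l1 v ^ 2 + K) := by
  have h := hsup _ (vecMulVec_self_mem_Mr v)
  simp only [minner_vecMulVec_self, mat1_vecMulVec_self] at h
  have hn' : (0 : ℝ) < n := Nat.cast_pos.mpr hn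
  rw [one_div_mul_eq_div] at h
  rw [← div_le_iff₀' hn']
  linarith

lemma abs_sum_mul_le_of_abs_le {ι : Type*} (s : Finset ι) {u : ι → ℝ} (a : ι → ℝ) {c : ℝ}
    (hc : 0 ≤ c) (hu : ∀ i ∈ s, |u i| ≤ c) :
    |∑ i ∈ s, u i * a i| ≤ c * √(#s : ℝ) * √(∑ i ∈ s, a i ^ 2) := by
  have hu2 : ∑ i ∈ s, u i ^ 2 ≤ (c * √(#s : ℝ)) ^ 2 := by
    rw [mul_pow, Real.sq_sqrt (Nat.cast_nonneg _), mul_comm, ← nsmul_eq_mul, ← Finset.sum_const]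
    exact Finset.sum_le_sum fun i hi => sq_le_sq.mpr ((hu i hi).trans_eq (abs_of_nonneg hc).symm)
  calc |∑ i ∈ s, u i * a i| ≤ ∑ i ∈ s, |u i| * |a i| := by
        simpa only [abs_mul] using Finset.abs_sum_le_sum_abs (fun i => u i * a i) s
    _ ≤ √(∑ i ∈ s, |u i| ^ 2) * √(∑ i ∈ s, |a i| ^ 2) := Real.sum_mul_le_sqrt_mul_sqrt _ _ _
    _ ≤ c * √(#s : ℝ) * √(∑ i ∈ s, a i ^ 2) := by
        simp only [sq_abs]
        gcongr
        exact (Real.sqrt_le_sqrt hu2).trans_eq (Real.sqrt_sq (by positivity))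

lemma sqrt_div_eq_one_div_mul_sqrt_mul_sqrt (a : ℝ) {b : ℝ} (hb : 0 < b) :
    √(a / b) = 1 / b * (√a * √b) := by
  rw [Real.sqrt_div' _ hb.le]
  field_simp
  rw [Real.sq_sqrt hb.le]

theorem statement5_general
    {d n : ℕ} (hn : 0 < n)
    (xt : Fin n → Fin d → ℝ)
    (Sig Ssq : Matrix (Fin d) (Fin d) ℝ) (hSig : Ssq * Ssq = Sig)
    (lam' c r : ℝ) (hlam' : 0 < lam') (hc : 0 < c)
    (hsup : ∀ M ∈ Mr d r,
      (1 / n : ℝ) * ∑ i, minner (vecMulVec (xt i) (xt i)) M - lam' * mat1 M ≤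
        opNorm Sig * r ^ 2)
    (m : ℕ) (Im : Finset (Fin n)) (hIm : Im.card = m)
    (u : Fin n → ℝ) (hu : ∀ i, |u i| ≤ c)
    (v : Fin d → ℝ) (hv : l2 v = r) :
    |∑ i ∈ Im, (1 / n : ℝ) * u i * ip (xt i) v| ≤
      c * Real.sqrt (m / n) * opNorm Ssq * r
        + c * Real.sqrt (m / n) * Real.sqrt lam' * l1 v := by
  subst hv hIm
  set X := opNorm Ssq * l2 v + √lam' * l1 v
  have hX : 0 ≤ X := by
    have := opNorm_nonneg Ssq; have := l1_nonneg v; have := l2_nonneg v; positivity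
  have hSig_le : opNorm Sig ≤ opNorm Ssq ^ 2 := hSig ▸ (opNorm_mul_le Ssq Ssq).trans_eq (sq _).symm
  have hfull : ∑ i, ip (xt i) v ^ 2 ≤ n * X ^ 2 :=
    (sum_ip_sq_le_of_sup_bound hn xt lam' _ v hsup).trans <| by
      gcongr
      exact mul_sq_add_mul_sq_le_sq_add hlam'.le (opNorm_nonneg Ssq) (l2_nonneg v) (l1_nonneg v)
        hSig_le
  have hpartial : √(∑ i ∈ Im, ip (xt i) v ^ 2) ≤ √n * X := by
    calc √(∑ i ∈ Im, ip (xt i) v ^ 2) ≤ √(∑ i, ip (xt i) v ^ 2) :=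
          Real.sqrt_le_sqrt (Finset.sum_le_univ_sum_of_nonneg fun i => sq_nonneg _)
      _ ≤ √(n * X ^ 2) := Real.sqrt_le_sqrt hfull
      _ = √n * X := by rw [Real.sqrt_mul (Nat.cast_nonneg _), Real.sqrt_sq hX]
  have hn' : (0 : ℝ) < n := Nat.cast_pos.mpr hn
  calc |∑ i ∈ Im, (1 / n : ℝ) * u i * ip (xt i) v|
        = 1 / n * |∑ i ∈ Im, u i * ip (xt i) v| := by
          simp only [mul_assoc, ← Finset.mul_sum, abs_mul, abs_of_pos (one_div_pos.mpr hn')]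
    _ ≤ 1 / n * (c * √(#Im : ℝ) * (√n * X)) := by
          gcongr
          exact (abs_sum_mul_le_of_abs_le Im _ hc.le fun i _ => hu i).trans (by gcongr)
    _ = _ := by rw [sqrt_div_eq_one_div_mul_sqrt_mul_sqrt _ hn']; ring

/-- Proposition: control of partial sums of truncated inliers. -/
theorem statement5
    {d n : ℕ} (hn : 0 < n)
    (xt : Fin n → Fin d → ℝ)
    (Sig Ssq : Matrix (Fin d) (Fin d) ℝ) (hpsd : Ssq.PosSemidef) (hSig : Ssq * Ssq = Sig)
    (lam' c r : ℝ) (hlam' : 0 < lam') (hc : 0 < c)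
    (hsup : ∀ M ∈ Mr d r,
      (1 / n : ℝ) * ∑ i, minner (vecMulVec (xt i) (xt i)) M - lam' * mat1 M ≤
        opNorm Sig * r ^ 2)
    (m : ℕ) (Im : Finset (Fin n)) (hIm : Im.card = m)
    (u : Fin n → ℝ) (hu : ∀ i, |u i| ≤ c)
    (v : Fin d → ℝ) (hv : l2 v = r) :
    |∑ i ∈ Im, (1 / n : ℝ) * u i * ip (xt i) v| ≤
      c * Real.sqrt (m / n) * opNorm Ssq * r
        + c * Real.sqrt (m / n) * Real.sqrt lam' * l1 v :=
  statement5_general hn xt Sig Ssq hSig lam' c r hlam' hc hsup m Im hIm u hu v hv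

end RobustSparse
end
end

section
/- Let x be a random vector in ℝ^d with σ_{x,4}^4 = max_j E[x_j^4] finite, and let x̃ be its coordinatewise truncation at level τ_x > 0. Then for all coordinates 1 ≤ j₁, j₂ ≤ d, E[x̃_{j₁} x̃_{j₂}] − E[x_{j₁} x_{j₂}] ≤ 2 σ_{x,4}^4 / τ_x²; in particular the entrywise maximum norm of E[x̃ x̃ᵀ] − E[x xᵀ] is at most 2 σ_{x,4}^4 / τ_x². -/
open MeasureTheory ProbabilityTheory Matrix Finset Real

noncomputable section

namespace RobustSparse

/-! Truncation only moves a coordinate `a` with `|a| > τ`, and then by at most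
`|a| ≤ |a| ^ 3 / τ ^ 2`. Writing `x̃ᵢ x̃ⱼ - xᵢ xⱼ = x̃ᵢ (x̃ⱼ - xⱼ) + xⱼ (x̃ᵢ - xᵢ)` and using
`|x̃ᵢ| ≤ |xᵢ|` gives the pointwise bound `|ab| (a² + b²) / τ² ≤ (a⁴ + b⁴) / τ²`, which is
integrated against the fourth moments. -/

lemma _root_.Real.sign_mul_abs (r : ℝ) : Real.sign r * |r| = r := by
  rcases lt_trichotomy r 0 with h | rfl | h
  · rw [Real.sign_of_neg h, abs_of_neg h]; ring
  · simp
  · rw [Real.sign_of_pos h, abs_of_pos h, one_mul]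

lemma _root_.Real.abs_sign_le_one (r : ℝ) : |Real.sign r| ≤ 1 := by
  rcases Real.sign_apply_eq r with h | h | h <;> simp [h]

lemma _root_.Real.measurable_sign : Measurable Real.sign :=
  Measurable.ite measurableSet_Iio measurable_const
    (Measurable.ite measurableSet_Ioi measurable_const measurable_const)

lemma abs_mul_pow_three_add_le (a b : ℝ) : |a| * |b| ^ 3 + |a| ^ 3 * |b| ≤ a ^ 4 + b ^ 4 := by
  rw [← Even.pow_abs (by norm_num : Even 4) a, ← Even.pow_abs (by norm_num : Even 4) b]
  -- `u⁴ + v⁴ - u v³ - u³ v = (u - v)² (u² + u v + v²)`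
  nlinarith [mul_nonneg (sq_nonneg (|a| - |b|))
    (add_nonneg (add_nonneg (sq_nonneg |a|) (mul_nonneg (abs_nonneg a) (abs_nonneg b)))
      (sq_nonneg |b|))]

section Truncation

variable {d : ℕ} {τ : ℝ}

lemma abs_trunc_le (hτ : 0 ≤ τ) (x : Fin d → ℝ) (j : Fin d) : |trunc τ x j| ≤ |x j| :=
  calc |trunc τ x j| = |Real.sign (x j)| * min |x j| τ := by
        rw [trunc, abs_mul, abs_of_nonneg (le_min (abs_nonneg _) hτ)]
    _ ≤ 1 * |x j| := by
        gcongr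
        exacts [Real.abs_sign_le_one _, min_le_left _ _]
    _ = |x j| := one_mul _

lemma abs_trunc_sub_le (hτ : 0 < τ) (x : Fin d → ℝ) (j : Fin d) :
    |trunc τ x j - x j| ≤ |x j| ^ 3 / τ ^ 2 := by
  have hsub : trunc τ x j - x j = Real.sign (x j) * (min |x j| τ - |x j|) := by
    rw [trunc, mul_sub, Real.sign_mul_abs]
  rcases le_or_gt |x j| τ with hle | hgt
  · rw [hsub, min_eq_left hle, sub_self, mul_zero, abs_zero]
    positivity
  · calc |trunc τ x j - x j| = |Real.sign (x j)| * (|x j| - τ) := by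
          rw [hsub, min_eq_right hgt.le, abs_mul, abs_sub_comm, abs_of_pos (sub_pos.2 hgt)]
      _ ≤ 1 * |x j| := mul_le_mul (Real.abs_sign_le_one _) (by linarith) (by linarith) zero_le_one
      _ = |x j| * τ ^ 2 / τ ^ 2 := by field_simp
      _ ≤ |x j| * |x j| ^ 2 / τ ^ 2 := by gcongr
      _ = |x j| ^ 3 / τ ^ 2 := by ring

lemma abs_trunc_mul_trunc_sub_le (hτ : 0 < τ) (x : Fin d → ℝ) (i j : Fin d) :
    |trunc τ x i * trunc τ x j - x i * x j| ≤ (x i ^ 4 + x j ^ 4) / τ ^ 2 :=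
  calc |trunc τ x i * trunc τ x j - x i * x j|
      = |trunc τ x i * (trunc τ x j - x j) + x j * (trunc τ x i - x i)| := by ring_nf
    _ ≤ |x i| * (|x j| ^ 3 / τ ^ 2) + |x j| * (|x i| ^ 3 / τ ^ 2) := by
        refine (abs_add_le _ _).trans ?_
        rw [abs_mul, abs_mul]
        exact add_le_add
          (mul_le_mul (abs_trunc_le hτ.le x i) (abs_trunc_sub_le hτ x j) (abs_nonneg _)
            (abs_nonneg _))
          (mul_le_mul_of_nonneg_left (abs_trunc_sub_le hτ x i) (abs_nonneg _))
    _ = (|x i| * |x j| ^ 3 + |x i| ^ 3 * |x j|) / τ ^ 2 := by ring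
    _ ≤ (x i ^ 4 + x j ^ 4) / τ ^ 2 :=
        div_le_div_of_nonneg_right (abs_mul_pow_three_add_le _ _) (by positivity)

end Truncation

lemma aestronglyMeasurable_trunc_apply {Ω : Type*} [MeasurableSpace Ω] {μ : Measure Ω} {d : ℕ}
    (τ : ℝ) {x : Ω → Fin d → ℝ} {j : Fin d} (hx : AEStronglyMeasurable (fun ω => x ω j) μ) :
    AEStronglyMeasurable (fun ω => trunc τ (x ω) j) μ :=
  have hclip : Measurable fun a : ℝ => Real.sign a * min |a| τ :=
    Real.measurable_sign.mul (measurable_id.abs.min measurable_const)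
  (hclip.comp_aemeasurable hx.aemeasurable).aestronglyMeasurable

lemma abs_integral_trunc_mul_trunc_sub_le {Ω : Type*} [MeasurableSpace Ω] {μ : Measure Ω}
    [IsFiniteMeasure μ] {d : ℕ} {x : Ω → Fin d → ℝ} (hmem : ∀ j, MemLp (fun ω => x ω j) 4 μ)
    {τ : ℝ} (hτ : 0 < τ) (i j : Fin d) :
    |(∫ ω, trunc τ (x ω) i * trunc τ (x ω) j ∂μ) - ∫ ω, x ω i * x ω j ∂μ|
      ≤ ((∫ ω, x ω i ^ 4 ∂μ) + ∫ ω, x ω j ^ 4 ∂μ) / τ ^ 2 := by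
  have hfourth : ∀ k, Integrable (fun ω => x ω k ^ 4) μ := fun k => by
    simpa [Even.pow_abs (by norm_num : Even 4)] using (hmem k).integrable_norm_pow (by norm_num)
  have hprod : Integrable (fun ω => x ω i * x ω j) μ :=
    ((hmem i).mono_exponent (p := 2) (by norm_num)).integrable_mul
      ((hmem j).mono_exponent (p := 2) (by norm_num))
  have hbound : Integrable (fun ω => (x ω i ^ 4 + x ω j ^ 4) / τ ^ 2) μ :=
    ((hfourth i).add (hfourth j)).div_const _
  have hdiff : Integrable (fun ω => trunc τ (x ω) i * trunc τ (x ω) j - x ω i * x ω j) μ :=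
    hbound.mono' (((aestronglyMeasurable_trunc_apply τ (hmem i).1).mul
      (aestronglyMeasurable_trunc_apply τ (hmem j).1)).sub hprod.aestronglyMeasurable)
      (ae_of_all _ fun ω => abs_trunc_mul_trunc_sub_le hτ (x ω) i j)
  have htrunc : Integrable (fun ω => trunc τ (x ω) i * trunc τ (x ω) j) μ := by
    simpa only [Pi.add_def, sub_add_cancel] using hdiff.add hprod
  calc |(∫ ω, trunc τ (x ω) i * trunc τ (x ω) j ∂μ) - ∫ ω, x ω i * x ω j ∂μ|
      = |∫ ω, (trunc τ (x ω) i * trunc τ (x ω) j - x ω i * x ω j) ∂μ| := by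
        rw [integral_sub htrunc hprod]
    _ ≤ ∫ ω, |trunc τ (x ω) i * trunc τ (x ω) j - x ω i * x ω j| ∂μ :=
        abs_integral_le_integral_abs
    _ ≤ ∫ ω, (x ω i ^ 4 + x ω j ^ 4) / τ ^ 2 ∂μ :=
        integral_mono hdiff.abs hbound fun ω => abs_trunc_mul_trunc_sub_le hτ (x ω) i j
    _ = ((∫ ω, x ω i ^ 4 ∂μ) + ∫ ω, x ω j ^ 4 ∂μ) / τ ^ 2 := by
        rw [integral_div, integral_add (hfourth i) (hfourth j)]

theorem statement13_general
    {Ω : Type*} [MeasurableSpace Ω] (μ : Measure Ω) [IsProbabilityMeasure μ]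
    {d : ℕ} (x : Ω → Fin d → ℝ)
    (hmem : ∀ j, MemLp (fun ω => x ω j) 4 μ)
    (σ4 : ℝ)
    (h4 : ∀ j, ∫ ω, x ω j ^ 4 ∂μ ≤ σ4 ^ 4)
    (τ : ℝ) (hτ : 0 < τ) :
    (∀ j1 j2 : Fin d,
        (∫ ω, trunc τ (x ω) j1 * trunc τ (x ω) j2 ∂μ) - ∫ ω, x ω j1 * x ω j2 ∂μ
          ≤ 2 * σ4 ^ 4 / τ ^ 2)
      ∧ ∀ j1 j2 : Fin d,
        |(∫ ω, trunc τ (x ω) j1 * trunc τ (x ω) j2 ∂μ) - ∫ ω, x ω j1 * x ω j2 ∂μ|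
          ≤ 2 * σ4 ^ 4 / τ ^ 2 := by
  have hbias : ∀ j1 j2 : Fin d,
      |(∫ ω, trunc τ (x ω) j1 * trunc τ (x ω) j2 ∂μ) - ∫ ω, x ω j1 * x ω j2 ∂μ|
        ≤ 2 * σ4 ^ 4 / τ ^ 2 := fun j1 j2 =>
    calc _ ≤ ((∫ ω, x ω j1 ^ 4 ∂μ) + ∫ ω, x ω j2 ^ 4 ∂μ) / τ ^ 2 :=
          abs_integral_trunc_mul_trunc_sub_le hmem hτ j1 j2
      _ ≤ 2 * σ4 ^ 4 / τ ^ 2 := by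
          gcongr
          linarith [h4 j1, h4 j2]
  exact ⟨fun j1 j2 => (le_abs_self _).trans (hbias j1 j2), hbias⟩

/-- bias of the truncated second moments. -/
theorem statement13
    {Ω : Type*} [MeasurableSpace Ω] (μ : Measure Ω) [IsProbabilityMeasure μ]
    {d : ℕ} (x : Ω → Fin d → ℝ) (hx : Measurable x)
    (hmem : ∀ j, MemLp (fun ω => x ω j) 4 μ)
    (σ4 : ℝ) (hσ4 : 0 ≤ σ4)
    (h4 : ∀ j, ∫ ω, x ω j ^ 4 ∂μ ≤ σ4 ^ 4)
    (τ : ℝ) (hτ : 0 < τ) :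
    (∀ j1 j2 : Fin d,
        (∫ ω, trunc τ (x ω) j1 * trunc τ (x ω) j2 ∂μ) - ∫ ω, x ω j1 * x ω j2 ∂μ
          ≤ 2 * σ4 ^ 4 / τ ^ 2)
      ∧ ∀ j1 j2 : Fin d,
        |(∫ ω, trunc τ (x ω) j1 * trunc τ (x ω) j2 ∂μ) - ∫ ω, x ω j1 * x ω j2 ∂μ|
          ≤ 2 * σ4 ^ 4 / τ ^ 2 :=
  statement13_general μ x hmem σ4 h4 τ hτ

end RobustSparse
end
end

section
/- Let x be a random vector in ℝ^d with zero mean and σ_{x,4}^4 = max_j E[x_j^4] finite, let x̃ be its coordinatewise truncation at level τ_x > 0, let Σ = E[x xᵀ], and let λ_Σ > 0 be the smallest singular value of Σ^{1/2}. Then for every v ∈ ℝ^d with ‖v‖₁ ≤ 3√s ‖v‖₂, one has E[(x̃ᵀ v)²] ≥ λ_Σ² ‖v‖₂² − 18 (σ_{x,4}^4 / τ_x²) s ‖v‖₂². -/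
open MeasureTheory ProbabilityTheory Matrix Finset Real

noncomputable section

namespace RobustSparse

/-!
Write `x̃ = x - (x - x̃)`. Pointwise `(x̃ᵀv)² ≥ (xᵀv)² - 2 (xᵀv)((x - x̃)ᵀv)`; the first term has
expectation `vᵀ Σ v = ‖Σ^{1/2} v‖₂² ≥ λ_Σ² ‖v‖₂²`. Since `|t - t̃| ≤ |t|³ / τ²` and
`|a| |b|³ ≤ (a⁴ + 3 b⁴) / 4`, every cross moment `E[x_j (x_k - x̃_k)]` is at most `σ⁴ / τ²` in
absolute value, so the cross term is at most `‖v‖₁² σ⁴ / τ² ≤ 9 s ‖v‖₂² σ⁴ / τ²` on the cone.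
-/

theorem trunc_apply {d : ℕ} {τ : ℝ} (hτ : 0 < τ) (x : Fin d → ℝ) (j : Fin d) :
    trunc τ x j = max (-τ) (min (x j) τ) := by
  unfold trunc
  rcases lt_trichotomy (x j) 0 with h | h | h
  · rw [Real.sign_of_neg h, abs_of_neg h]
    rcases le_total (-x j) τ with h' | h'
    · rw [min_eq_left h', min_eq_left (by linarith), max_eq_right (by linarith)]; ring
    · rw [min_eq_right h', min_eq_left (by linarith), max_eq_left (by linarith)]; ring
  · simp [h, hτ.le]
  · rw [Real.sign_of_pos h, abs_of_pos h, one_mul, max_eq_right (by linarith [le_min h.le hτ.le])]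

theorem abs_clip_le {τ : ℝ} (hτ : 0 < τ) (a : ℝ) : |max (-τ) (min a τ)| ≤ τ :=
  abs_le.mpr ⟨le_max_left _ _, max_le (by linarith) (min_le_right _ _)⟩

theorem abs_sub_clip_le {τ : ℝ} (hτ : 0 < τ) (a : ℝ) :
    |a - max (-τ) (min a τ)| ≤ |a| ^ 3 / τ ^ 2 := by
  rcases le_total |a| τ with h | h
  · obtain ⟨h₁, h₂⟩ := abs_le.mp h
    rw [min_eq_left h₂, max_eq_right h₁, sub_self, abs_zero]
    positivity
  · have hclip : |a - max (-τ) (min a τ)| ≤ |a| := by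
      rcases le_total 0 a with ha | ha
      · rw [abs_of_nonneg ha] at h ⊢
        rw [min_eq_right h, max_eq_right (by linarith), abs_of_nonneg (by linarith)]
        linarith
      · rw [abs_of_nonpos ha] at h ⊢
        rw [min_eq_left (by linarith), max_eq_left (by linarith), abs_of_nonpos (by linarith)]
        linarith
    calc |a - max (-τ) (min a τ)| ≤ |a| := hclip
      _ = |a| * (τ / τ) ^ 2 := by rw [div_self hτ.ne', one_pow, mul_one]
      _ ≤ |a| * (|a| / τ) ^ 2 := by gcongr
      _ = |a| ^ 3 / τ ^ 2 := by ring

theorem mul_pow_three_le (a b : ℝ) :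
    a * b ^ 3 ≤ a ^ 4 / 4 + 3 * b ^ 4 / 4 := by
  nlinarith [sq_nonneg (a - b), sq_nonneg (a + b), sq_nonneg a, sq_nonneg b, sq_nonneg (a * b)]

theorem abs_mul_sub_clip_le {τ : ℝ} (hτ : 0 < τ) (a b : ℝ) :
    |a * (b - max (-τ) (min b τ))| ≤ (a ^ 4 + 3 * b ^ 4) / (4 * τ ^ 2) := by
  calc |a * (b - max (-τ) (min b τ))| ≤ |a| * (|b| ^ 3 / τ ^ 2) := by
        rw [abs_mul]; gcongr; exact abs_sub_clip_le hτ b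
    _ ≤ (|a| ^ 4 / 4 + 3 * |b| ^ 4 / 4) / τ ^ 2 := by
        rw [← mul_div_assoc]; gcongr; exact mul_pow_three_le |a| |b|
    _ = (a ^ 4 + 3 * b ^ 4) / (4 * τ ^ 2) := by
        rw [(by decide : Even 4).pow_abs, (by decide : Even 4).pow_abs]; field_simp

section Moments

variable {Ω : Type*} [MeasurableSpace Ω] {μ : Measure Ω} {X Y : Ω → ℝ} {τ : ℝ}

theorem _root_.MeasureTheory.MemLp.integrable_pow_four (hX : MemLp X 4 μ) :
    Integrable (fun ω => X ω ^ 4) μ := by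
  simpa [(by decide : Even 4).pow_abs] using hX.integrable_norm_pow (p := 4) (by norm_num)

theorem integrable_mul_sub_clip [IsFiniteMeasure μ] (hτ : 0 < τ) (hX : MemLp X 4 μ)
    (hY : MemLp Y 4 μ) : Integrable (fun ω => X ω * (Y ω - max (-τ) (min (Y ω) τ))) μ := by
  have hclip : Continuous fun t : ℝ => max (-τ) (min t τ) := by fun_prop
  refine Integrable.mono'
    ((hX.integrable_pow_four.add (hY.integrable_pow_four.const_mul 3)).div_const (4 * τ ^ 2))
    (hX.1.mul (hY.1.sub (hclip.comp_aestronglyMeasurable hY.1)))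
    (ae_of_all _ fun ω => abs_mul_sub_clip_le hτ (X ω) (Y ω))

theorem abs_integral_mul_sub_clip_le (hτ : 0 < τ) (hX : MemLp X 4 μ) (hY : MemLp Y 4 μ)
    {M : ℝ} (hXM : ∫ ω, X ω ^ 4 ∂μ ≤ M) (hYM : ∫ ω, Y ω ^ 4 ∂μ ≤ M) :
    |∫ ω, X ω * (Y ω - max (-τ) (min (Y ω) τ)) ∂μ| ≤ M / τ ^ 2 := by
  have hX4 := hX.integrable_pow_four
  have hY4 := hY.integrable_pow_four
  calc |∫ ω, X ω * (Y ω - max (-τ) (min (Y ω) τ)) ∂μ|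
      ≤ ∫ ω, (X ω ^ 4 + 3 * Y ω ^ 4) / (4 * τ ^ 2) ∂μ := by
        rw [← Real.norm_eq_abs]
        exact norm_integral_le_of_norm_le ((hX4.add (hY4.const_mul 3)).div_const _)
          (ae_of_all _ fun ω => abs_mul_sub_clip_le hτ (X ω) (Y ω))
    _ = ((∫ ω, X ω ^ 4 ∂μ) + 3 * ∫ ω, Y ω ^ 4 ∂μ) / (4 * τ ^ 2) := by
        rw [integral_div, integral_add hX4 (hY4.const_mul 3), integral_const_mul]
    _ ≤ (M + 3 * M) / (4 * τ ^ 2) := by gcongr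
    _ = M / τ ^ 2 := by field_simp; ring

end Moments

theorem ip_sub_left {d : ℕ} (a b v : Fin d → ℝ) : ip (a - b) v = ip a v - ip b v := by
  simp only [ip, Pi.sub_apply, sub_mul, Finset.sum_sub_distrib]

theorem ip_mul_ip {d : ℕ} (a b v : Fin d → ℝ) :
    ip a v * ip b v = ∑ j, ∑ k, v j * v k * (a j * b k) := by
  rw [ip, ip, Finset.sum_mul_sum]
  exact Finset.sum_congr rfl fun j _ => Finset.sum_congr rfl fun k _ => by ring

theorem l2_sq {d : ℕ} (v : Fin d → ℝ) : l2 v ^ 2 = ∑ i, v i ^ 2 :=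
  Real.sq_sqrt (Finset.sum_nonneg fun _ _ => sq_nonneg _)

theorem sum_sum_mul_le_l1_sq {d : ℕ} (v : Fin d → ℝ) {c : Fin d → Fin d → ℝ} {C : ℝ}
    (hc : ∀ j k, |c j k| ≤ C) : ∑ j, ∑ k, v j * v k * c j k ≤ l1 v ^ 2 * C := by
  rw [l1, sq, Finset.sum_mul_sum, Finset.sum_mul]
  refine Finset.sum_le_sum fun j _ => ?_
  rw [Finset.sum_mul]
  refine Finset.sum_le_sum fun k _ => ?_
  calc v j * v k * c j k ≤ |v j * v k * c j k| := le_abs_self _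
    _ ≤ |v j| * |v k| * C := by rw [abs_mul, abs_mul]; gcongr; exact hc j k

theorem sum_sum_mul_transpose_mul_self {d : ℕ} (S : Matrix (Fin d) (Fin d) ℝ) (v : Fin d → ℝ) :
    ∑ j, ∑ k, v j * v k * (Sᵀ * S) j k = l2 (S *ᵥ v) ^ 2 := by
  calc ∑ j, ∑ k, v j * v k * (Sᵀ * S) j k = v ⬝ᵥ (Sᵀ * S) *ᵥ v := by
        simp only [dotProduct, Matrix.mulVec, Finset.mul_sum]
        exact Finset.sum_congr rfl fun j _ => Finset.sum_congr rfl fun k _ => by ring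
    _ = (S *ᵥ v) ⬝ᵥ (S *ᵥ v) := by
        rw [← Matrix.mulVec_mulVec, dotProduct_mulVec, vecMul_transpose]
    _ = l2 (S *ᵥ v) ^ 2 := by rw [l2_sq]; simp only [dotProduct, sq]

section RandomVector

variable {Ω : Type*} [MeasurableSpace Ω] {μ : Measure Ω} {d : ℕ} {x : Ω → Fin d → ℝ} {τ : ℝ}

theorem integral_ip_mul_ip {a b : Ω → Fin d → ℝ}
    (hab : ∀ j k, Integrable (fun ω => a ω j * b ω k) μ) (v : Fin d → ℝ) :
    Integrable (fun ω => ip (a ω) v * ip (b ω) v) μ ∧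
      ∫ ω, ip (a ω) v * ip (b ω) v ∂μ = ∑ j, ∑ k, v j * v k * ∫ ω, a ω j * b ω k ∂μ := by
  simp only [ip_mul_ip]
  refine ⟨integrable_finsetSum _ fun j _ =>
    integrable_finsetSum _ fun k _ => (hab j k).const_mul _, ?_⟩
  rw [integral_finsetSum _ fun j _ =>
    integrable_finsetSum _ fun k _ => (hab j k).const_mul _]
  refine Finset.sum_congr rfl fun j _ => ?_
  rw [integral_finsetSum _ fun k _ => (hab j k).const_mul _]
  exact Finset.sum_congr rfl fun k _ => integral_const_mul _ _

theorem memLp_trunc_apply [IsFiniteMeasure μ] (hτ : 0 < τ)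
    (hx : ∀ j, AEStronglyMeasurable (fun ω => x ω j) μ) (p : ENNReal) (j : Fin d) :
    MemLp (fun ω => trunc τ (x ω) j) p μ := by
  simp only [trunc_apply hτ]
  have hclip : Continuous fun t : ℝ => max (-τ) (min t τ) := by fun_prop
  exact MemLp.of_bound (hclip.comp_aestronglyMeasurable (hx j)) τ
    (ae_of_all _ fun ω => abs_clip_le hτ (x ω j))

theorem integral_ip_trunc_sq_ge [IsFiniteMeasure μ] (hτ : 0 < τ)
    (hx : ∀ j, MemLp (fun ω => x ω j) 4 μ) {M : ℝ} (hM : ∀ j, ∫ ω, x ω j ^ 4 ∂μ ≤ M)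
    (v : Fin d → ℝ) :
    ∑ j, ∑ k, v j * v k * ∫ ω, x ω j * x ω k ∂μ - 2 * (l1 v ^ 2 * (M / τ ^ 2))
      ≤ ∫ ω, ip (trunc τ (x ω)) v ^ 2 ∂μ := by
  have hx2 : ∀ j, MemLp (fun ω => x ω j) 2 μ := fun j => (hx j).mono_exponent (by norm_num)
  obtain ⟨hXX, hXX_eq⟩ := integral_ip_mul_ip (fun j k => (hx2 j).integrable_mul (hx2 k)) v
  have hcross_apply : ∀ j k, (fun ω => x ω j * (x ω - trunc τ (x ω)) k)
      = fun ω => x ω j * (x ω k - max (-τ) (min (x ω k) τ)) := by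
    intro j k; simp only [Pi.sub_apply, trunc_apply hτ]
  obtain ⟨hXD, hXD_eq⟩ := integral_ip_mul_ip (a := x) (b := fun ω => x ω - trunc τ (x ω))
    (fun j k => hcross_apply j k ▸ integrable_mul_sub_clip hτ (hx j) (hx k)) v
  have hXD_le : ∫ ω, ip (x ω) v * ip (x ω - trunc τ (x ω)) v ∂μ ≤ l1 v ^ 2 * (M / τ ^ 2) := by
    rw [hXD_eq]
    refine sum_sum_mul_le_l1_sq v fun j k => ?_
    rw [hcross_apply]
    exact abs_integral_mul_sub_clip_le hτ (hx j) (hx k) (hM j) (hM k)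
  have hT := memLp_trunc_apply hτ (fun j => (hx j).1) 2
  have hTT := (integral_ip_mul_ip (fun j k => (hT j).integrable_mul (hT k)) v).1
  have hpoint : ∀ ω, ip (x ω) v * ip (x ω) v - 2 * (ip (x ω) v * ip (x ω - trunc τ (x ω)) v)
      ≤ ip (trunc τ (x ω)) v ^ 2 := by
    intro ω
    rw [ip_sub_left]
    nlinarith [sq_nonneg (ip (x ω) v - ip (trunc τ (x ω)) v)]
  calc ∑ j, ∑ k, v j * v k * ∫ ω, x ω j * x ω k ∂μ - 2 * (l1 v ^ 2 * (M / τ ^ 2))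
      ≤ ∫ ω, ip (x ω) v * ip (x ω) v ∂μ
          - 2 * ∫ ω, ip (x ω) v * ip (x ω - trunc τ (x ω)) v ∂μ := by rw [hXX_eq]; linarith
    _ = ∫ ω, ip (x ω) v * ip (x ω) v - 2 * (ip (x ω) v * ip (x ω - trunc τ (x ω)) v) ∂μ := by
        rw [integral_sub hXX (hXD.const_mul 2), integral_const_mul]
    _ ≤ ∫ ω, ip (trunc τ (x ω)) v ^ 2 ∂μ :=
        integral_mono (hXX.sub (hXD.const_mul 2)) (by simpa only [sq] using hTT) hpoint

end RandomVector

theorem statement16_general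
    {Ω : Type*} [MeasurableSpace Ω] (μ : Measure Ω) [IsProbabilityMeasure μ]
    {d s : ℕ} (x : Ω → Fin d → ℝ)
    (hmem : ∀ j, MemLp (fun ω => x ω j) 4 μ)
    (σ4 : ℝ)
    (h4 : ∀ j, ∫ ω, x ω j ^ 4 ∂μ ≤ σ4 ^ 4)
    (Ssq : Matrix (Fin d) (Fin d) ℝ) (hpsd : Ssq.PosSemidef)
    (hSsq : Ssq * Ssq = Matrix.of fun j k => ∫ ω, x ω j * x ω k ∂μ)
    (lamSig : ℝ) (hlamSig : 0 < lamSig)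
    (hsv : ∀ v : Fin d → ℝ, lamSig * l2 v ≤ l2 (Ssq *ᵥ v))
    (τ : ℝ) (hτ : 0 < τ) :
    ∀ v : Fin d → ℝ, l1 v ≤ 3 * Real.sqrt s * l2 v →
      ∫ ω, ip (trunc τ (x ω)) v ^ 2 ∂μ
        ≥ lamSig ^ 2 * l2 v ^ 2 - 18 * (σ4 ^ 4 / τ ^ 2) * s * l2 v ^ 2 := by
  intro v hcone
  have hsymm : Ssqᵀ = Ssq := (isHermitian_iff_isSymm.mp hpsd.isHermitian).eq
  have hcov : ∑ j, ∑ k, v j * v k * ∫ ω, x ω j * x ω k ∂μ = l2 (Ssq *ᵥ v) ^ 2 := by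
    rw [← sum_sum_mul_transpose_mul_self, hsymm, hSsq]; rfl
  have hlow : lamSig ^ 2 * l2 v ^ 2 ≤ l2 (Ssq *ᵥ v) ^ 2 := by
    rw [← mul_pow]
    exact pow_le_pow_left₀ (mul_nonneg hlamSig.le (Real.sqrt_nonneg _)) (hsv v) 2
  have hl1 : l1 v ^ 2 ≤ 9 * s * l2 v ^ 2 := by
    calc l1 v ^ 2 ≤ (3 * Real.sqrt s * l2 v) ^ 2 :=
          pow_le_pow_left₀ (Finset.sum_nonneg fun _ _ => abs_nonneg _) hcone 2
      _ = 9 * s * l2 v ^ 2 := by rw [mul_pow, mul_pow, Real.sq_sqrt (Nat.cast_nonneg s)]; ring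
  have hmain := integral_ip_trunc_sq_ge hτ hmem h4 v
  rw [hcov] at hmain
  have hratio : 0 ≤ σ4 ^ 4 / τ ^ 2 := by positivity
  nlinarith [mul_le_mul_of_nonneg_right hl1 hratio]

/-- lower bound for the truncated quadratic form on the cone. -/
theorem statement16
    {Ω : Type*} [MeasurableSpace Ω] (μ : Measure Ω) [IsProbabilityMeasure μ]
    {d s : ℕ} (hs : 1 ≤ s) (x : Ω → Fin d → ℝ) (hx : Measurable x)
    (hmem : ∀ j, MemLp (fun ω => x ω j) 4 μ)
    (hmean : ∀ j, ∫ ω, x ω j ∂μ = 0)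
    (σ4 : ℝ) (hσ4 : 0 ≤ σ4)
    (h4 : ∀ j, ∫ ω, x ω j ^ 4 ∂μ ≤ σ4 ^ 4)
    (Ssq : Matrix (Fin d) (Fin d) ℝ) (hpsd : Ssq.PosSemidef)
    (hSsq : Ssq * Ssq = Matrix.of fun j k => ∫ ω, x ω j * x ω k ∂μ)
    (lamSig : ℝ) (hlamSig : 0 < lamSig)
    (hsv : ∀ v : Fin d → ℝ, lamSig * l2 v ≤ l2 (Ssq *ᵥ v))
    (τ : ℝ) (hτ : 0 < τ) :
    ∀ v : Fin d → ℝ, l1 v ≤ 3 * Real.sqrt s * l2 v →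
      ∫ ω, ip (trunc τ (x ω)) v ^ 2 ∂μ
        ≥ lamSig ^ 2 * l2 v ^ 2 - 18 * (σ4 ^ 4 / τ ^ 2) * s * l2 v ^ 2 :=
  statement16_general μ x hmem σ4 h4 Ssq hpsd hSsq lamSig hlamSig hsv τ hτ

end RobustSparse
end
end
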